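/- arXiv:2506.00760 — 2 statements merged into one kernel-verified Lean document; each statement's English description precedes it below -/
import Mathlib

section
/- Let G be a subgroup of GL(n, ℂ) such that there exists a positive integer b with g^b = 1 for every g ∈ G. Then G is a finite group. -/
open Matrix Polynomial

lemma charpoly_root_pow_eq_one {n b : ℕ} (M : Matrix (Fin n) (Fin n) ℂ)
    (hM : M ^ b = 1) {μ : ℂ} (hμ : μ ∈ M.charpoly.roots) : μ ^ b = 1 := by
  have hroot : M.charpoly.IsRoot μ := isRoot_of_mem_roots hμ
  have hmap : (charmatrix M).map (Polynomial.evalRingHom μ) =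
      μ • (1 : Matrix (Fin n) (Fin n) ℂ) - M := by
    ext i j
    by_cases hij : i = j <;>
      simp [hij, charmatrix_apply, Matrix.one_apply, Matrix.diagonal_apply]
  have hdet : (μ • (1 : Matrix (Fin n) (Fin n) ℂ) - M).det = 0 := by
    have h1 : (Polynomial.evalRingHom μ) (charmatrix M).det =
        ((charmatrix M).map (Polynomial.evalRingHom μ)).det := RingHom.map_det _ _
    rw [hmap] at h1
    have h2 : (Polynomial.evalRingHom μ) (charmatrix M).det = 0 := hroot
    rw [h2] at h1
    exact h1.symm
  obtain ⟨v, hv0, hv⟩ := Matrix.exists_mulVec_eq_zero_iff.mpr hdet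
  have hMv : M *ᵥ v = μ • v := by
    rw [Matrix.sub_mulVec, sub_eq_zero] at hv
    rw [← hv, Matrix.smul_mulVec, Matrix.one_mulVec]
  have hpow : ∀ k : ℕ, (M ^ k) *ᵥ v = μ ^ k • v := by
    intro k
    induction k with
    | zero => simp [Matrix.one_mulVec]
    | succ k ih =>
      rw [pow_succ', ← Matrix.mulVec_mulVec, ih, Matrix.mulVec_smul, hMv,
        smul_smul, pow_succ', mul_comm]
  have hb1 : μ ^ b • v = v := by rw [← hpow, hM, Matrix.one_mulVec]
  obtain ⟨i, hi⟩ := Function.ne_iff.mp hv0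
  have : μ ^ b * v i = v i := congrFun hb1 i
  have := mul_right_cancel₀ hi (this.trans (one_mul (v i)).symm)
  exact this

lemma nilpotent_eq_zero_of_one_add_pow {n b : ℕ} (hb : 0 < b)
    (N : Matrix (Fin n) (Fin n) ℂ) (hnil : IsNilpotent N)
    (h : (1 + N) ^ b = 1) : N = 0 := by
  by_contra hN0
  obtain ⟨m, hm⟩ := hnil
  have hkex : ∃ j : ℕ, N ^ (j + 1) = 0 := ⟨m, by rw [pow_succ, hm, zero_mul]⟩
  set k := Nat.find hkex with hk
  have hk1 : N ^ (k + 1) = 0 := Nat.find_spec hkex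
  have hkpos : 0 < k := by
    rcases Nat.eq_zero_or_pos k with h0 | h0
    · exfalso; apply hN0; rw [← pow_one N, ← zero_add 1, ← h0]; exact hk1
    · exact h0
  have hNk : N ^ k ≠ 0 := by
    have := Nat.find_min hkex (show k - 1 < k by omega)
    rwa [show k - 1 + 1 = k by omega] at this
  have hexp : (1 : Matrix (Fin n) (Fin n) ℂ) =
      ∑ i ∈ Finset.range (b + 1), N ^ i * (b.choose i : Matrix (Fin n) (Fin n) ℂ) := by
    have hc : Commute N (1 : Matrix (Fin n) (Fin n) ℂ) := Commute.one_right N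
    have := hc.add_pow b
    rw [add_comm] at h
    rw [h] at this
    simpa using this
  have h2 : ∑ i ∈ Finset.range b, N ^ (i + 1) * (b.choose (i + 1) : Matrix (Fin n) (Fin n) ℂ) = 0 := by
    have := hexp
    rw [Finset.sum_range_succ'] at this
    simp only [pow_zero, Nat.choose_zero_right, Nat.cast_one, one_mul, mul_one] at this
    have := sub_eq_zero.mpr this.symm
    simpa using this
  have h3 : ∑ i ∈ Finset.range b, N ^ (i + 1) * (b.choose (i + 1) : Matrix (Fin n) (Fin n) ℂ)
      * N ^ (k - 1) = 0 := by
    rw [← Finset.sum_mul, h2, zero_mul]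
  have h4 : ∀ i ∈ Finset.range b, i ≠ 0 →
      N ^ (i + 1) * (b.choose (i + 1) : Matrix (Fin n) (Fin n) ℂ) * N ^ (k - 1) = 0 := by
    intro i _ hi0
    have hcomm := (Nat.cast_commute (b.choose (i + 1)) (N ^ (k - 1))).symm.eq
    rw [mul_assoc, ← hcomm, ← mul_assoc, ← pow_add]
    have : N ^ (i + 1 + (k - 1)) = 0 := by
      have heq : i + 1 + (k - 1) = (k + 1) + (i - 1) := by omega
      rw [heq, pow_add, hk1, zero_mul]
    rw [this, zero_mul]
  have h5 : N ^ 1 * (b.choose 1 : Matrix (Fin n) (Fin n) ℂ) * N ^ (k - 1) = 0 := by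
    have := Finset.sum_eq_single_of_mem 0 (Finset.mem_range.mpr hb) h4
    rw [this] at h3
    simpa using h3
  have h6 : N ^ k * (b : Matrix (Fin n) (Fin n) ℂ) = 0 := by
    have hcomm := (Nat.cast_commute (b.choose 1) (N ^ (k - 1))).symm.eq
    rw [mul_assoc, ← hcomm, ← mul_assoc, ← pow_add, Nat.choose_one_right] at h5
    rwa [show 1 + (k - 1) = k by omega] at h5
  have h7 : (b : ℂ) • N ^ k = 0 := by
    rw [Nat.cast_smul_eq_nsmul, nsmul_eq_mul, (Nat.cast_commute b (N ^ k)).eq, h6]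
  have hbne : (b : ℂ) ≠ 0 := Nat.cast_ne_zero.mpr hb.ne'
  exact hNk (by
    have := congrArg (fun x => (b : ℂ)⁻¹ • x) h7
    simpa [smul_smul, inv_mul_cancel₀ hbne] using this)

lemma exists_finset_subset_span_eq {K M : Type*} [Field K] [AddCommGroup M] [Module K M]
    [FiniteDimensional K M] (S : Set M) :
    ∃ t : Finset M, ↑t ⊆ S ∧ Submodule.span K (t : Set M) = Submodule.span K S := by
  classical
  have hfg : (Submodule.span K S).FG := IsNoetherian.noetherian _
  have hcomp := (Submodule.fg_iff_compact _).mp hfg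
  have hle : Submodule.span K S ≤ ⨆ x : S, Submodule.span K {(x : M)} := by
    rw [Submodule.span_le]
    intro x hx
    exact Submodule.mem_iSup_of_mem ⟨x, hx⟩ (Submodule.mem_span_singleton_self x)
  obtain ⟨u, hu⟩ := CompleteLattice.IsCompactElement.exists_finset_of_le_iSup (hk := hcomp) (h := hle)
  refine ⟨u.image Subtype.val, ?_, le_antisymm ?_ ?_⟩
  · intro x hx
    obtain ⟨y, _, rfl⟩ := Finset.mem_image.mp hx
    exact y.2
  · apply Submodule.span_mono
    intro x hx
    obtain ⟨y, _, rfl⟩ := Finset.mem_image.mp hx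
    exact y.2
  · refine le_trans hu ?_
    refine iSup₂_le fun i hiu => ?_
    refine Submodule.span_le.mpr ?_
    intro x hx
    rw [Set.mem_singleton_iff] at hx
    subst hx
    exact Submodule.subset_span (Finset.mem_coe.mpr (Finset.mem_image_of_mem _ hiu))

lemma charpoly_roots_card {n : ℕ} (M : Matrix (Fin n) (Fin n) ℂ) :
    Multiset.card M.charpoly.roots = n := by
  rw [splits_iff_card_roots.mp (IsAlgClosed.splits M.charpoly),
    Matrix.charpoly_natDegree_eq_dim, Fintype.card_fin]

lemma eq_one_of_trace_eq {n b : ℕ} (hb : 0 < b) (M : Matrix (Fin n) (Fin n) ℂ)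
    (hM : M ^ b = 1) (ht : M.trace = (n : ℂ)) : M = 1 := by
  have hcard : Multiset.card M.charpoly.roots = n := charpoly_roots_card M
  have hsum : M.charpoly.roots.sum = (n : ℂ) := by
    rw [← Matrix.trace_eq_sum_roots_charpoly, ht]
  have habs : ∀ x ∈ M.charpoly.roots, ‖x‖ = 1 := by
    intro x hx
    have hx1 : x ^ b = 1 := charpoly_root_pow_eq_one M hM hx
    have hxb : ‖x‖ ^ b = 1 := by rw [← norm_pow, hx1]; exact norm_one
    rcases lt_trichotomy ‖x‖ 1 with hl | he | hg
    · have := pow_lt_one₀ (by positivity) hl hb.ne'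
      linarith
    · exact he
    · have := one_lt_pow₀ hg hb.ne'
      linarith
  have key : ∀ s : Multiset ℂ, (s.map (fun x => 1 - x.re)).sum
      = (Multiset.card s : ℝ) - (s.map Complex.re).sum := by
    intro s
    induction s using Multiset.induction_on with
    | empty => simp
    | cons a s ih => simp [ih]; ring
  have hre_sum : (M.charpoly.roots.map Complex.re).sum = (n : ℝ) := by
    have := (map_multiset_sum Complex.reAddGroupHom M.charpoly.roots).symm
    simp only [Complex.coe_reAddGroupHom] at this
    rw [show (Multiset.map Complex.re M.charpoly.roots) = (Multiset.map (fun x => x.re) M.charpoly.roots) from rfl, this, hsum, Complex.natCast_re]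
  have hzero : ((M.charpoly.roots.map (fun x => 1 - x.re))).sum = 0 := by
    rw [key, hcard, hre_sum, sub_self]
  have hall : ∀ x ∈ M.charpoly.roots, x = 1 := by
    intro x hx
    have h1 : (1 : ℝ) - x.re = 0 := by
      refine Multiset.all_zero_of_le_zero_le_of_sum_eq_zero ?_ hzero _ ?_
      · intro y hy
        obtain ⟨z, hz, rfl⟩ := Multiset.mem_map.mp hy
        have := Complex.re_le_norm z
        have := habs z hz
        linarith
      · exact Multiset.mem_map_of_mem _ hx
    have hre : x.re = 1 := by linarith
    have hns : Complex.normSq x = 1 := by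
      rw [Complex.normSq_eq_norm_sq, habs x hx, one_pow]
    have him : x.im = 0 := by
      rw [Complex.normSq_apply, hre] at hns
      nlinarith
    exact Complex.ext (by simp [hre]) (by simp [him])
  have hrep : M.charpoly.roots = Multiset.replicate n 1 :=
    Multiset.eq_replicate.mpr ⟨hcard, hall⟩
  have hcp : M.charpoly = (X - C 1) ^ n := by
    conv_lhs => rw [((IsAlgClosed.splits M.charpoly).eq_prod_roots_of_monic
      M.charpoly_monic)]
    rw [hrep, Multiset.map_replicate, Multiset.prod_replicate]
  have hnil : (M - 1) ^ n = 0 := by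
    have := M.aeval_self_charpoly
    rw [hcp] at this
    simpa [map_pow, map_sub, aeval_X, aeval_C] using this
  have hN := nilpotent_eq_zero_of_one_add_pow hb (M - 1) ⟨n, hnil⟩ (by
    rw [add_sub_cancel]; exact hM)
  rw [sub_eq_zero] at hN
  exact hN

noncomputable def traceSet (n b : ℕ) : Finset ℂ :=
  ((Multiset.powersetCard n (n • ((Polynomial.nthRoots b (1 : ℂ)).toFinset.val))).toFinset).image
    Multiset.sum

lemma trace_mem_traceSet {n b : ℕ} (hb : 0 < b) (M : Matrix (Fin n) (Fin n) ℂ)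
    (hM : M ^ b = 1) : M.trace ∈ traceSet n b := by
  classical
  have hcard : Multiset.card M.charpoly.roots = n := charpoly_roots_card M
  refine Finset.mem_image.mpr ⟨M.charpoly.roots, ?_, ?_⟩
  · rw [Multiset.mem_toFinset, Multiset.mem_powersetCard]
    refine ⟨?_, hcard⟩
    rw [Multiset.le_iff_count]
    intro a
    by_cases ha : a ∈ M.charpoly.roots
    · have hmem : a ∈ (Polynomial.nthRoots b (1 : ℂ)).toFinset := by
        rw [Multiset.mem_toFinset, Polynomial.mem_nthRoots hb]
        exact charpoly_root_pow_eq_one M hM ha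
      have h1 : Multiset.count a ((Polynomial.nthRoots b (1 : ℂ)).toFinset.val) = 1 :=
        Multiset.count_eq_one_of_mem ((Polynomial.nthRoots b (1 : ℂ)).toFinset.nodup) hmem
      rw [Multiset.count_nsmul, h1, mul_one]
      calc Multiset.count a M.charpoly.roots ≤ Multiset.card M.charpoly.roots :=
            Multiset.count_le_card a _
        _ = n := hcard
    · rw [Multiset.count_eq_zero_of_notMem ha]
      exact Nat.zero_le _
  · exact (Matrix.trace_eq_sum_roots_charpoly M).symm


/-- Burnside: a subgroup of `GL(n, ℂ)` of bounded exponent is finite. -/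
theorem burnside_bounded_exponent_finite (n : ℕ)
    (G : Subgroup (GL (Fin n) ℂ)) (b : ℕ) (hb : 0 < b)
    (h : ∀ g ∈ G, g ^ b = 1) : (G : Set (GL (Fin n) ℂ)).Finite := by
  classical
  set S : Set (Matrix (Fin n) (Fin n) ℂ) :=
    (fun u : GL (Fin n) ℂ => (u : Matrix (Fin n) (Fin n) ℂ)) '' (G : Set (GL (Fin n) ℂ)) with hS
  obtain ⟨t, htS, htspan⟩ := exists_finset_subset_span_eq (K := ℂ) S
  -- matrix power fact
  have hpow : ∀ g ∈ G, ((g : GL (Fin n) ℂ) : Matrix (Fin n) (Fin n) ℂ) ^ b = 1 := by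
    intro g hg
    have := h g hg
    calc ((g : GL (Fin n) ℂ) : Matrix (Fin n) (Fin n) ℂ) ^ b
        = ((g ^ b : GL (Fin n) ℂ) : Matrix (Fin n) (Fin n) ℂ) :=
          (Units.val_pow_eq_pow_val g b).symm
      _ = 1 := by rw [this]; rfl
  -- the injection
  have hmem : ∀ (g : (G : Set (GL (Fin n) ℂ))) (x : t),
      Matrix.trace (((g : GL (Fin n) ℂ) : Matrix (Fin n) (Fin n) ℂ) * (x : Matrix (Fin n) (Fin n) ℂ))
        ∈ traceSet n b := by
    intro g x
    obtain ⟨u, hu, hux⟩ := htS x.2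
    have hgu : (g : GL (Fin n) ℂ) * u ∈ G := G.mul_mem g.2 hu
    have : ((g : GL (Fin n) ℂ) : Matrix (Fin n) (Fin n) ℂ) * (x : Matrix (Fin n) (Fin n) ℂ)
        = (((g : GL (Fin n) ℂ) * u : GL (Fin n) ℂ) : Matrix (Fin n) (Fin n) ℂ) := by
      rw [← hux]; rfl
    rw [this]
    exact trace_mem_traceSet hb _ (hpow _ hgu)
  let φ : ↥(G : Set (GL (Fin n) ℂ)) → (t → (traceSet n b : Finset ℂ)) := fun g x =>
    ⟨Matrix.trace (((g : GL (Fin n) ℂ) : Matrix (Fin n) (Fin n) ℂ)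
      * (x : Matrix (Fin n) (Fin n) ℂ)), hmem g x⟩
  have hinj : Function.Injective φ := by
    intro g g' hgg'
    set u : Matrix (Fin n) (Fin n) ℂ :=
      ((g : GL (Fin n) ℂ) : Matrix (Fin n) (Fin n) ℂ)
        - ((g' : GL (Fin n) ℂ) : Matrix (Fin n) (Fin n) ℂ) with hu
    let L : Matrix (Fin n) (Fin n) ℂ →ₗ[ℂ] ℂ :=
      (Matrix.traceLinearMap (Fin n) ℂ ℂ).comp (LinearMap.mulLeft ℂ u)
    have hker : Submodule.span ℂ S ≤ LinearMap.ker L := by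
      rw [← htspan, Submodule.span_le]
      intro x hx
      have hx' : x ∈ t := hx
      have := congrFun hgg' ⟨x, hx'⟩
      have heq : Matrix.trace (((g : GL (Fin n) ℂ) : Matrix (Fin n) (Fin n) ℂ) * x)
          = Matrix.trace (((g' : GL (Fin n) ℂ) : Matrix (Fin n) (Fin n) ℂ) * x) :=
        congrArg Subtype.val this
      simp only [SetLike.mem_coe, LinearMap.mem_ker, L, LinearMap.comp_apply,
        LinearMap.mulLeft_apply, Matrix.traceLinearMap_apply, hu, sub_mul,
        Matrix.trace_sub, heq, sub_self]
    have hginvS : (((g : GL (Fin n) ℂ)⁻¹ : GL (Fin n) ℂ) : Matrix (Fin n) (Fin n) ℂ) ∈ S :=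
      ⟨(g : GL (Fin n) ℂ)⁻¹, G.inv_mem g.2, rfl⟩
    have hL0 : L (((g : GL (Fin n) ℂ)⁻¹ : GL (Fin n) ℂ) : Matrix (Fin n) (Fin n) ℂ) = 0 :=
      hker (Submodule.subset_span hginvS)
    have htr : Matrix.trace ((((g' : GL (Fin n) ℂ) * (g : GL (Fin n) ℂ)⁻¹ : GL (Fin n) ℂ)
        : Matrix (Fin n) (Fin n) ℂ)) = (n : ℂ) := by
      have h1 : ((g : GL (Fin n) ℂ) : Matrix (Fin n) (Fin n) ℂ)
          * (((g : GL (Fin n) ℂ)⁻¹ : GL (Fin n) ℂ) : Matrix (Fin n) (Fin n) ℂ) = 1 := by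
        rw [← Units.val_mul, mul_inv_cancel]; rfl
      simp only [L, LinearMap.comp_apply, LinearMap.mulLeft_apply,
        Matrix.traceLinearMap_apply, hu, sub_mul, Matrix.trace_sub, sub_eq_zero] at hL0
      rw [h1] at hL0
      rw [← Units.val_mul] at hL0
      rw [← hL0, Matrix.trace_one, Fintype.card_fin]
    set k : GL (Fin n) ℂ := (g' : GL (Fin n) ℂ) * (g : GL (Fin n) ℂ)⁻¹ with hk
    have hkG : k ∈ G := G.mul_mem g'.2 (G.inv_mem g.2)
    have hk1 : (k : Matrix (Fin n) (Fin n) ℂ) = 1 :=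
      eq_one_of_trace_eq hb _ (hpow k hkG) htr
    have : k = 1 := Units.ext hk1
    have : (g' : GL (Fin n) ℂ) = (g : GL (Fin n) ℂ) := by
      have := congrArg (fun z => z * (g : GL (Fin n) ℂ)) this
      simpa [hk, mul_assoc] using this
    exact Subtype.ext this.symm
  have hfin : Finite (G : Set (GL (Fin n) ℂ)) := Finite.of_injective φ hinj
  exact Set.toFinite _
end

section
/- Let Y be a preconnected topological space and M : Y → GL(n, ℂ) a continuous map such that M(y) has finite order in GL(n, ℂ) for every y ∈ Y. Then the characteristic polynomial of M(y) is independent of y, i.e., for all y₁, y₂ ∈ Y the matrices M(y₁) and M(y₂) have the same characteristic polynomial. -/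
open Matrix Polynomial

/-- The set of all roots of unity in `ℂ` is countable. -/
lemma aux_countable_rootsOfUnity :
    Set.Countable {z : ℂ | ∃ k : ℕ, 0 < k ∧ z ^ k = 1} := by
  have heq : {z : ℂ | ∃ k : ℕ, 0 < k ∧ z ^ k = 1}
      = ⋃ k : ℕ, {z : ℂ | 0 < k ∧ z ^ k = 1} := by
    ext z; simp [Set.mem_iUnion]
  rw [heq]
  refine Set.countable_iUnion fun k => ?_
  rcases Nat.eq_zero_or_pos k with hk | hk
  · subst hk
    convert Set.countable_empty
    ext z; simp
  · refine Set.Finite.countable ?_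
    refine Set.Finite.subset (Polynomial.nthRoots k (1 : ℂ)).toFinset.finite_toSet ?_
    intro z hz
    simp only [Multiset.mem_toFinset, Finset.coe_sort_coe, Finset.mem_coe]
    rw [Polynomial.mem_nthRoots hk]
    exact hz.2

/-- A continuous `ℂ`-valued function on a preconnected space taking values in a
countable set is constant. -/
lemma aux_const_of_countable {Y : Type*} [TopologicalSpace Y] [PreconnectedSpace Y]
    {f : Y → ℂ} (hf : Continuous f) {S : Set ℂ} (hS : S.Countable)
    (hrange : ∀ y, f y ∈ S) (y₁ y₂ : Y) : f y₁ = f y₂ := by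
  by_contra h
  have hd : 0 < dist (f y₁) (f y₂) := dist_pos.mpr h
  set g : Y → ℝ := fun y => dist (f y) (f y₂) with hg
  have hgc : Continuous g := hf.dist continuous_const
  have hpc : IsPreconnected (Set.range g) := isPreconnected_range hgc
  have hoc : Set.OrdConnected (Set.range g) := hpc.ordConnected
  have h0 : (0 : ℝ) ∈ Set.range g := ⟨y₂, by simp [hg]⟩
  have h1 : dist (f y₁) (f y₂) ∈ Set.range g := ⟨y₁, rfl⟩
  have hIcc : Set.Icc (0 : ℝ) (dist (f y₁) (f y₂)) ⊆ Set.range g := hoc.out h0 h1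
  have hrc : (Set.range g).Countable := by
    have : Set.range g ⊆ (fun z => dist z (f y₂)) '' S := by
      rintro _ ⟨y, rfl⟩
      exact ⟨f y, hrange y, rfl⟩
    exact ((hS.image _).mono this)
  have hIccC : (Set.Icc (0 : ℝ) (dist (f y₁) (f y₂))).Countable := hrc.mono hIcc
  have := hIccC.to_subtype
  have hcard : (Cardinal.mk (Set.Icc (0 : ℝ) (dist (f y₁) (f y₂)))) ≤ Cardinal.aleph0 :=
    Cardinal.mk_le_aleph0
  rw [Cardinal.mk_Icc_real hd] at hcard
  exact Cardinal.aleph0_lt_continuum.not_ge hcard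

/-- Evaluation of the characteristic polynomial. -/
lemma aux_eval_charpoly {n : ℕ} (A : Matrix (Fin n) (Fin n) ℂ) (t : ℂ) :
    (A.charpoly).eval t = (t • (1 : Matrix (Fin n) (Fin n) ℂ) - A).det := by
  rw [Matrix.charpoly, _root_.eval_det, matPolyEquiv_charmatrix]
  congr 1
  rw [eval_sub, eval_X, eval_C]
  congr 1
  rw [Matrix.scalar_apply, Matrix.smul_eq_diagonal_mul, Matrix.mul_one]

/-- Roots of the characteristic polynomial of a finite-order matrix are roots of unity. -/
lemma aux_root_pow_eq_one {n k : ℕ} (hk : 0 < k) {A : Matrix (Fin n) (Fin n) ℂ}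
    (hA : A ^ k = 1) {r : ℂ} (hr : r ∈ A.charpoly.roots) : r ^ k = 1 := by
  rcases Nat.eq_zero_or_pos n with hn | hn
  · subst hn
    have h1 : A.charpoly = 1 := by
      have := A.charpoly_monic
      rw [← Polynomial.Monic.natDegree_eq_zero this]
      simp
    rw [h1, Polynomial.roots_one] at hr
    simp at hr
  · have hroot : A.charpoly.IsRoot r :=
      Polynomial.isRoot_of_mem_roots hr
    have hdet : (r • (1 : Matrix (Fin n) (Fin n) ℂ) - A).det = 0 := by
      rw [← aux_eval_charpoly]; exact hroot
    have hcomm : Commute (r • (1 : Matrix (Fin n) (Fin n) ℂ)) A := by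
      unfold Commute SemiconjBy
      rw [Matrix.smul_mul, Matrix.mul_smul, Matrix.one_mul, Matrix.mul_one]
    have hgeo := hcomm.geom_sum₂_mul k
    have h2 : ((r • (1 : Matrix (Fin n) (Fin n) ℂ)) ^ k - A ^ k).det = 0 := by
      rw [← hgeo, Matrix.det_mul, hdet, mul_zero]
    rw [hA, _root_.smul_pow, one_pow] at h2
    have h3 : (r ^ k • (1 : Matrix (Fin n) (Fin n) ℂ) - 1)
        = (r ^ k - 1) • (1 : Matrix (Fin n) (Fin n) ℂ) := by
      rw [sub_smul, one_smul]
    rw [h3, Matrix.det_smul, Matrix.det_one, mul_one] at h2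
    have h4 : (r ^ k - 1 : ℂ) = 0 := by
      have := pow_eq_zero_iff (n := Fintype.card (Fin n)) (by simp [hn.ne']) |>.mp h2
      exact this
    linear_combination h4

/-- Product over a mapped list as a product over `Fin`. -/
lemma aux_list_prod {β : Type*} [CommMonoid β] (l : List ℂ) (f : ℂ → β) :
    (l.map f).prod = ∏ i : Fin l.length, f (l.get i) := by
  conv_lhs => rw [← List.ofFn_get l, List.map_ofFn, List.prod_ofFn]
  rfl

/-- If `M : Y → GL(n, ℂ)` is continuous on a preconnected space and each
`M y` has finite order, then the characteristic polynomial of `M y` is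
independent of `y`. -/
theorem charpoly_constant_of_finite_order {Y : Type*} [TopologicalSpace Y]
    [PreconnectedSpace Y] (n : ℕ) (M : Y → GL (Fin n) ℂ)
    (hcont : Continuous fun y => ((M y : GL (Fin n) ℂ) : Matrix (Fin n) (Fin n) ℂ))
    (hfin : ∀ y, IsOfFinOrder (M y)) :
    ∀ y₁ y₂ : Y,
      ((M y₁ : GL (Fin n) ℂ) : Matrix (Fin n) (Fin n) ℂ).charpoly =
      ((M y₂ : GL (Fin n) ℂ) : Matrix (Fin n) (Fin n) ℂ).charpoly := by
  intro y₁ y₂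
  apply Polynomial.funext
  intro t
  set U : Set ℂ := {z : ℂ | ∃ k : ℕ, 0 < k ∧ z ^ k = 1} with hU
  set S : Set ℂ := (fun ζ : Fin n → ℂ => ∏ i, (t - ζ i)) ''
    (Set.pi Set.univ fun _ => U) with hS
  have hScount : S.Countable :=
    (Set.countable_univ_pi fun _ => aux_countable_rootsOfUnity).image _
  have key : ∀ y : Y,
      Polynomial.eval t ((M y : GL (Fin n) ℂ) : Matrix (Fin n) (Fin n) ℂ).charpoly ∈ S := by
    intro y
    obtain ⟨k, hk, hMk⟩ := isOfFinOrder_iff_pow_eq_one.mp (hfin y)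
    set A : Matrix (Fin n) (Fin n) ℂ := ((M y : GL (Fin n) ℂ) : Matrix (Fin n) (Fin n) ℂ)
      with hA
    have hAk : A ^ k = 1 := by
      have := congrArg (Units.val) hMk
      simpa [hA] using this
    have hmonic := A.charpoly_monic
    have hsplits : A.charpoly.Splits := IsAlgClosed.splits _
    have hsplit : A.charpoly = (A.charpoly.roots.map fun r => X - C r).prod :=
      hsplits.eq_prod_roots_of_monic hmonic
    have hcard : Multiset.card A.charpoly.roots = n := by
      rw [(Polynomial.splits_iff_card_roots).mp hsplits]
      simp
    set l := A.charpoly.roots.toList with hl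
    have hlen : l.length = n := by rw [hl, Multiset.length_toList, hcard]
    refine ⟨fun i => l.get (Fin.cast hlen.symm i), ?_, ?_⟩
    · intro i _
      refine ⟨k, hk, aux_root_pow_eq_one hk hAk ?_⟩
      rw [← Multiset.mem_toList]
      exact l.get_mem _
    · have h1 : Polynomial.eval t A.charpoly
          = (A.charpoly.roots.map fun r => t - r).prod := by
        conv_lhs => rw [hsplit]
        rw [Polynomial.eval_multiset_prod, Multiset.map_map]
        congr 1
        apply Multiset.map_congr rfl
        intro r _
        simp
      rw [h1]
      have h2 : A.charpoly.roots = (l : Multiset ℂ) := (Multiset.coe_toList _).symm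
      rw [h2, Multiset.map_coe, Multiset.prod_coe, aux_list_prod]
      exact Fintype.prod_equiv (finCongr hlen.symm) _ _ (fun i => rfl)
  have hcont' : Continuous fun y =>
      Polynomial.eval t ((M y : GL (Fin n) ℂ) : Matrix (Fin n) (Fin n) ℂ).charpoly := by
    have : (fun y =>
        Polynomial.eval t ((M y : GL (Fin n) ℂ) : Matrix (Fin n) (Fin n) ℂ).charpoly)
        = fun y => (t • (1 : Matrix (Fin n) (Fin n) ℂ)
            - ((M y : GL (Fin n) ℂ) : Matrix (Fin n) (Fin n) ℂ)).det := by
      funext y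
      exact aux_eval_charpoly _ t
    rw [this]
    exact (continuous_const.sub hcont).matrix_det
  exact aux_const_of_countable hcont' hScount key y₁ y₂
end
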